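/- arXiv:2208.04106 — 6 statements merged into one kernel-verified Lean document; each statement's English description precedes it below -/
import Mathlib

section
/- Let p ∈ (1,∞) and δ ≥ 0, and let φ = φ_{p,δ}. Then φ' is differentiable on (0,∞) and for every t > 0 (and δ ≥ 0 with δ + t > 0) its derivative satisfies min{1, p−1}·(δ+t)^{p−2} ≤ (φ')'(t) ≤ max{1, p−1}·(δ+t)^{p−2}; i.e., φ is a balanced N-function. -/
/-- The N-function derivative `φ'(s) = (δ + s)^(p-2) * s` (real power). -/
noncomputable def phiDeriv (p δ s : ℝ) : ℝ := (δ + s) ^ (p - 2) * s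

/-!
Differentiating gives `(φ')'(t) = (δ+t)^(p-2) · (1·δ + (p-1)·t) / (δ+t)`, and for `δ, t ≥ 0` the
last factor is a weighted mean of `1` and `p-1`, hence lies between their minimum and maximum.
-/

lemma min_le_weighted_mean {a b c d : ℝ} (ha : 0 ≤ a) (hb : 0 ≤ b) (hab : 0 < a + b) :
    min c d ≤ (c * a + d * b) / (a + b) := by
  rw [le_div_iff₀ hab, mul_add]
  exact add_le_add (mul_le_mul_of_nonneg_right (min_le_left c d) ha)
    (mul_le_mul_of_nonneg_right (min_le_right c d) hb)

lemma weighted_mean_le_max {a b c d : ℝ} (ha : 0 ≤ a) (hb : 0 ≤ b) (hab : 0 < a + b) :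
    (c * a + d * b) / (a + b) ≤ max c d := by
  rw [div_le_iff₀ hab, mul_add]
  exact add_le_add (mul_le_mul_of_nonneg_right (le_max_left c d) ha)
    (mul_le_mul_of_nonneg_right (le_max_right c d) hb)

lemma hasDerivAt_phiDeriv (p : ℝ) {δ t : ℝ} (h : δ + t ≠ 0) :
    HasDerivAt (phiDeriv p δ)
      ((δ + t) ^ (p - 2) * ((1 * δ + (p - 1) * t) / (δ + t))) t := by
  have hbase : HasDerivAt (fun s : ℝ => δ + s) 1 t := (hasDerivAt_id t).const_add δ
  have hpow : HasDerivAt (fun s : ℝ => (δ + s) ^ (p - 2))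
      ((p - 2) * (δ + t) ^ (p - 2 - 1) * 1) t :=
    (Real.hasDerivAt_rpow_const (Or.inl h)).comp t hbase
  refine (hpow.mul (hasDerivAt_id' t)).congr_deriv ?_
  rw [Real.rpow_sub_one h]
  field_simp
  ring

theorem stmt0_general (p δ : ℝ) (hδ : 0 ≤ δ) :
    ∀ t : ℝ, 0 < t →
      DifferentiableAt ℝ (phiDeriv p δ) t ∧
      min 1 (p - 1) * (δ + t) ^ (p - 2) ≤ deriv (phiDeriv p δ) t ∧
      deriv (phiDeriv p δ) t ≤ max 1 (p - 1) * (δ + t) ^ (p - 2) := by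
  intro t ht
  have hsum : 0 < δ + t := by linarith
  have hderiv := hasDerivAt_phiDeriv p hsum.ne'
  have hpow : 0 ≤ (δ + t) ^ (p - 2) := (Real.rpow_pos_of_pos hsum _).le
  rw [hderiv.deriv]
  refine ⟨hderiv.differentiableAt, ?_, ?_⟩
  · rw [mul_comm]
    exact mul_le_mul_of_nonneg_left (min_le_weighted_mean hδ ht.le hsum) hpow
  · rw [mul_comm (max 1 (p - 1))]
    exact mul_le_mul_of_nonneg_left (weighted_mean_le_max hδ ht.le hsum) hpow

/-- For `p ∈ (1,∞)` and `δ ≥ 0`, the derivative `φ'` of the N-function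
`φ = φ_{p,δ}` is differentiable at every `t > 0`, and its derivative satisfies
`min 1 (p-1) * (δ+t)^(p-2) ≤ (φ')'(t) ≤ max 1 (p-1) * (δ+t)^(p-2)`,
i.e., `φ` is a balanced N-function. -/
theorem stmt0 (p δ : ℝ) (hp : 1 < p) (hδ : 0 ≤ δ) :
    ∀ t : ℝ, 0 < t →
      DifferentiableAt ℝ (phiDeriv p δ) t ∧
      min 1 (p - 1) * (δ + t) ^ (p - 2) ≤ deriv (phiDeriv p δ) t ∧
      deriv (phiDeriv p δ) t ≤ max 1 (p - 1) * (δ + t) ^ (p - 2) :=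
  stmt0_general p δ hδ
end

section
/- For every p ∈ (1,∞) there exist constants c, C > 0, depending only on p, such that for all δ ≥ 0 and t ≥ 0 the convex conjugate of φ = φ_{p,δ} satisfies c·(δ^{p−1}+t)^{p'−2}·t² ≤ φ*(t) ≤ C·(δ^{p−1}+t)^{p'−2}·t², where p' = p/(p−1) (with the convention that the outer expressions equal 0 when δ^{p−1}+t = 0). -/
/-- The N-function `φ_{p,δ}(t) = ∫₀ᵗ φ'(s) ds`. -/
noncomputable def phi (p δ t : ℝ) : ℝ := ∫ s in (0:ℝ)..t, phiDeriv p δ s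

/-- The convex conjugate `φ*(t) = sup_{s ≥ 0} (s·t − φ(s))`. -/
noncomputable def phiConj (p δ t : ℝ) : ℝ :=
  sSup ((fun s => s * t - phi p δ s) '' Set.Ici (0 : ℝ))

open Real MeasureTheory

lemma phiDeriv_nonneg {p δ s : ℝ} (hδ : 0 ≤ δ) (hs : 0 ≤ s) : 0 ≤ phiDeriv p δ s :=
  mul_nonneg (Real.rpow_nonneg (by linarith) _) hs

lemma phiDeriv_scale {p : ℝ} (hp : 1 < p) {δ θ s : ℝ} (hδ : 0 ≤ δ)
    (hθ0 : 0 < θ) (hθ1 : θ ≤ 1) (hs : 0 ≤ s) :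
    θ ^ max 1 (p - 1) * phiDeriv p δ s ≤ phiDeriv p δ (θ * s) ∧
      phiDeriv p δ (θ * s) ≤ θ ^ min 1 (p - 1) * phiDeriv p δ s := by
  rcases eq_or_lt_of_le hs with h0 | hs0
  · simp [phiDeriv, ← h0]
  have hθpow : θ ^ (p - 1) = θ ^ (p - 2) * θ := by
    rw [show p - 1 = (p - 2) + 1 by ring, Real.rpow_add hθ0, Real.rpow_one]
  have hx : 0 < δ + s := by linarith
  have hx2 : 0 < δ + θ * s := by positivity
  have hθs : θ * (δ + s) ≤ δ + θ * s := by nlinarith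
  have hθs' : δ + θ * s ≤ δ + s := by nlinarith
  unfold phiDeriv
  rcases le_or_gt 2 p with h2 | h2
  · rw [max_eq_right (by linarith : (1:ℝ) ≤ p - 1), min_eq_left (by linarith : (1:ℝ) ≤ p - 1),
      Real.rpow_one]
    constructor
    · calc θ ^ (p - 1) * ((δ + s) ^ (p - 2) * s)
          = (θ * (δ + s)) ^ (p - 2) * (θ * s) := by
            rw [Real.mul_rpow hθ0.le hx.le, hθpow]; ring
        _ ≤ (δ + θ * s) ^ (p - 2) * (θ * s) := by
            apply mul_le_mul_of_nonneg_right
              (Real.rpow_le_rpow (by positivity) hθs (by linarith)) (by positivity)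
    · calc (δ + θ * s) ^ (p - 2) * (θ * s)
          ≤ (δ + s) ^ (p - 2) * (θ * s) := by
            apply mul_le_mul_of_nonneg_right
              (Real.rpow_le_rpow hx2.le hθs' (by linarith)) (by positivity)
        _ = θ * ((δ + s) ^ (p - 2) * s) := by ring
  · rw [max_eq_left (by linarith : p - 1 ≤ (1:ℝ)), min_eq_right (by linarith : p - 1 ≤ (1:ℝ)),
      Real.rpow_one]
    constructor
    · calc θ * ((δ + s) ^ (p - 2) * s)
          = (δ + s) ^ (p - 2) * (θ * s) := by ring
        _ ≤ (δ + θ * s) ^ (p - 2) * (θ * s) := by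
            apply mul_le_mul_of_nonneg_right
              (Real.rpow_le_rpow_of_nonpos hx2 hθs' (by linarith)) (by positivity)
    · calc (δ + θ * s) ^ (p - 2) * (θ * s)
          ≤ (θ * (δ + s)) ^ (p - 2) * (θ * s) := by
            apply mul_le_mul_of_nonneg_right
              (Real.rpow_le_rpow_of_nonpos (by positivity) hθs (by linarith)) (by positivity)
        _ = θ ^ (p - 1) * ((δ + s) ^ (p - 2) * s) := by
            rw [Real.mul_rpow hθ0.le hx.le, hθpow]; ring

lemma phiDeriv_monoOn {p : ℝ} (hp : 1 < p) {δ : ℝ} (hδ : 0 ≤ δ) :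
    MonotoneOn (phiDeriv p δ) (Set.Ici 0) := by
  intro s1 hs1 s2 hs2 h12
  have hs1' : (0:ℝ) ≤ s1 := hs1
  have hs2' : (0:ℝ) ≤ s2 := hs2
  rcases eq_or_lt_of_le hs1' with h0 | h0
  · have : phiDeriv p δ s1 = 0 := by simp [phiDeriv, ← h0]
    rw [this]; exact phiDeriv_nonneg hδ hs2'
  have hs2p : 0 < s2 := lt_of_lt_of_le h0 h12
  have hθ0 : 0 < s1 / s2 := div_pos h0 hs2p
  have hθ1 : s1 / s2 ≤ 1 := div_le_one_of_le₀ h12 hs2p.le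
  have h := (phiDeriv_scale hp hδ hθ0 hθ1 hs2p.le).2
  rw [div_mul_cancel₀ _ hs2p.ne'] at h
  refine h.trans ?_
  have h1 : (s1 / s2) ^ min 1 (p - 1) ≤ 1 :=
    Real.rpow_le_one hθ0.le hθ1 (le_min zero_le_one (by linarith))
  exact mul_le_of_le_one_left (phiDeriv_nonneg hδ hs2p.le) h1

lemma phiDeriv_intInt {p : ℝ} (hp : 1 < p) {δ : ℝ} (hδ : 0 ≤ δ) {a b : ℝ}
    (ha : 0 ≤ a) (hb : 0 ≤ b) : IntervalIntegrable (phiDeriv p δ) volume a b := by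
  apply MonotoneOn.intervalIntegrable
  exact (phiDeriv_monoOn hp hδ).mono (fun x hx => le_trans (le_min ha hb) hx.1)

lemma phi_nonneg {p δ s : ℝ} (hδ : 0 ≤ δ) (hs : 0 ≤ s) : 0 ≤ phi p δ s :=
  intervalIntegral.integral_nonneg hs (fun x hx => phiDeriv_nonneg hδ hx.1)

lemma phi_le {p : ℝ} (hp : 1 < p) {δ s : ℝ} (hδ : 0 ≤ δ) (hs : 0 ≤ s) :
    phi p δ s ≤ s * phiDeriv p δ s := by
  have h := intervalIntegral.integral_mono_on (μ := volume) hs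
    (phiDeriv_intInt hp hδ le_rfl hs) intervalIntegrable_const
    (fun x hx => phiDeriv_monoOn hp hδ hx.1 hs hx.2)
  rw [intervalIntegral.integral_const] at h
  simpa [phi, smul_eq_mul] using h

lemma phi_ge {p : ℝ} (hp : 1 < p) {δ s : ℝ} (hδ : 0 ≤ δ) (hs : 0 ≤ s) :
    s / 2 * phiDeriv p δ (s / 2) ≤ phi p δ s := by
  have h2 : (0:ℝ) ≤ s / 2 := by linarith
  have hsplit : (∫ x in (0:ℝ)..(s/2), phiDeriv p δ x) + (∫ x in (s/2)..s, phiDeriv p δ x)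
      = phi p δ s :=
    intervalIntegral.integral_add_adjacent_intervals (phiDeriv_intInt hp hδ le_rfl h2)
      (phiDeriv_intInt hp hδ h2 hs)
  have h1 : 0 ≤ ∫ x in (0:ℝ)..(s/2), phiDeriv p δ x :=
    intervalIntegral.integral_nonneg h2 (fun x hx => phiDeriv_nonneg hδ hx.1)
  have h3 : s / 2 * phiDeriv p δ (s / 2) ≤ ∫ x in (s/2)..s, phiDeriv p δ x := by
    have h := intervalIntegral.integral_mono_on (μ := volume) (by linarith : s/2 ≤ s)
      intervalIntegrable_const (phiDeriv_intInt hp hδ h2 hs)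
      (fun x hx => phiDeriv_monoOn hp hδ h2 (le_trans h2 hx.1) hx.1)
    rw [intervalIntegral.integral_const, smul_eq_mul] at h
    calc s / 2 * phiDeriv p δ (s / 2) = (s - s/2) * phiDeriv p δ (s/2) := by ring
      _ ≤ _ := h
  linarith

lemma rpow_sandwich {p : ℝ} {D x A B : ℝ} (hD : 0 < D) (hA : 0 < A) (hB : 0 < B)
    (h1 : A * D ≤ x) (h2 : x ≤ B * D) :
    min (A ^ (p-2)) (B ^ (p-2)) * D ^ (p-2) ≤ x ^ (p-2) ∧
      x ^ (p-2) ≤ max (A ^ (p-2)) (B ^ (p-2)) * D ^ (p-2) := by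
  have hx : 0 < x := lt_of_lt_of_le (by positivity) h1
  have hDp : (0:ℝ) ≤ D ^ (p-2) := Real.rpow_nonneg hD.le _
  rcases le_or_gt 0 (p - 2) with he | he
  · constructor
    · calc min (A ^ (p-2)) (B ^ (p-2)) * D ^ (p-2) ≤ A ^ (p-2) * D ^ (p-2) :=
          mul_le_mul_of_nonneg_right (min_le_left _ _) hDp
        _ = (A * D) ^ (p-2) := (Real.mul_rpow hA.le hD.le).symm
        _ ≤ x ^ (p-2) := Real.rpow_le_rpow (by positivity) h1 he
    · calc x ^ (p-2) ≤ (B * D) ^ (p-2) := Real.rpow_le_rpow hx.le h2 he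
        _ = B ^ (p-2) * D ^ (p-2) := Real.mul_rpow hB.le hD.le
        _ ≤ max (A ^ (p-2)) (B ^ (p-2)) * D ^ (p-2) :=
          mul_le_mul_of_nonneg_right (le_max_right _ _) hDp
  · constructor
    · calc min (A ^ (p-2)) (B ^ (p-2)) * D ^ (p-2) ≤ B ^ (p-2) * D ^ (p-2) :=
          mul_le_mul_of_nonneg_right (min_le_right _ _) hDp
        _ = (B * D) ^ (p-2) := (Real.mul_rpow hB.le hD.le).symm
        _ ≤ x ^ (p-2) := Real.rpow_le_rpow_of_nonpos hx h2 he.le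
    · calc x ^ (p-2) ≤ (A * D) ^ (p-2) := Real.rpow_le_rpow_of_nonpos (by positivity) h1 he.le
        _ = A ^ (p-2) * D ^ (p-2) := Real.mul_rpow hA.le hD.le
        _ ≤ max (A ^ (p-2)) (B ^ (p-2)) * D ^ (p-2) :=
          mul_le_mul_of_nonneg_right (le_max_left _ _) hDp

set_option maxHeartbeats 1000000 in
/-- For every `p ∈ (1,∞)` there are constants `c, C > 0`, depending only
on `p`, such that for all `δ ≥ 0` and `t ≥ 0` the convex conjugate of `φ = φ_{p,δ}`
satisfies `c·(δ^(p-1)+t)^(p'-2)·t² ≤ φ*(t) ≤ C·(δ^(p-1)+t)^(p'-2)·t²`, where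
`p' = p/(p-1)` (when `δ^(p-1)+t = 0` one has `t = 0`, so the outer expressions vanish). -/
theorem stmt4 (p : ℝ) (hp : 1 < p) :
    ∃ c C : ℝ, 0 < c ∧ 0 < C ∧
      ∀ δ : ℝ, 0 ≤ δ → ∀ t : ℝ, 0 ≤ t →
        c * (δ ^ (p - 1) + t) ^ (p / (p - 1) - 2) * t ^ 2 ≤ phiConj p δ t ∧
        phiConj p δ t ≤ C * (δ ^ (p - 1) + t) ^ (p / (p - 1) - 2) * t ^ 2 := by
  have hp1 : (0:ℝ) < p - 1 := by linarith
  obtain ⟨m, hm_def⟩ : ∃ m : ℝ, m = min 1 (p - 1) := ⟨_, rfl⟩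
  obtain ⟨Mx, hMx_def⟩ : ∃ Mx : ℝ, Mx = max 1 (p - 1) := ⟨_, rfl⟩
  have hm0 : 0 < m := by rw [hm_def]; exact lt_min one_pos hp1
  obtain ⟨q, hq_def⟩ : ∃ q : ℝ, q = 1 / (p - 1) := ⟨_, rfl⟩
  have hq0 : 0 < q := by rw [hq_def]; positivity
  obtain ⟨c₃, hc3_def⟩ : ∃ x : ℝ, x = min ((1/2:ℝ) ^ q) (1/2) := ⟨_, rfl⟩
  have hc30 : 0 < c₃ := by
    rw [hc3_def]; exact lt_min (Real.rpow_pos_of_pos one_half_pos _) one_half_pos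
  obtain ⟨k, hk_def⟩ : ∃ x : ℝ, x = min (c₃ ^ (p-2)) ((2:ℝ) ^ (p-2)) := ⟨_, rfl⟩
  obtain ⟨K, hK_def⟩ : ∃ x : ℝ, x = max (c₃ ^ (p-2)) ((2:ℝ) ^ (p-2)) := ⟨_, rfl⟩
  have hk0 : 0 < k := by
    rw [hk_def]; exact lt_min (Real.rpow_pos_of_pos hc30 _) (Real.rpow_pos_of_pos two_pos _)
  have hK0 : 0 < K := lt_of_lt_of_le hk0 (by rw [hk_def, hK_def]; exact min_le_max)
  obtain ⟨μ, hμ_def⟩ : ∃ x : ℝ, x = (1/2:ℝ) ^ Mx := ⟨_, rfl⟩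
  have hμ0 : 0 < μ := by rw [hμ_def]; exact Real.rpow_pos_of_pos one_half_pos _
  obtain ⟨θ, hθ_def⟩ : ∃ x : ℝ, x = min 1 ((2*K) ^ (-(1/m))) := ⟨_, rfl⟩
  have hθ0 : 0 < θ := by
    rw [hθ_def]; exact lt_min one_pos (Real.rpow_pos_of_pos (by linarith) _)
  have hθ1 : θ ≤ 1 := by rw [hθ_def]; exact min_le_left _ _
  have hθK : θ ^ m * K ≤ 1/2 := by
    have h1 : θ ^ m ≤ ((2*K) ^ (-(1/m))) ^ m :=
      Real.rpow_le_rpow hθ0.le (by rw [hθ_def]; exact min_le_right _ _) hm0.le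
    have h2 : ((2*K) ^ (-(1/m))) ^ m = (2*K)⁻¹ := by
      rw [← Real.rpow_mul (by linarith), show -(1/m) * m = -1 by field_simp,
        Real.rpow_neg_one]
    have h3 : θ ^ m * K ≤ (2*K)⁻¹ * K :=
      mul_le_mul_of_nonneg_right (h2 ▸ h1) hK0.le
    have h4 : (2*K)⁻¹ * K = 1/2 := by field_simp
    linarith
  obtain ⟨M, hM_def⟩ : ∃ x : ℝ, x = max 1 ((2/(μ*k)) ^ (1/m)) := ⟨_, rfl⟩
  have hM1 : 1 ≤ M := by rw [hM_def]; exact le_max_left _ _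
  have hM0 : (0:ℝ) < M := by linarith
  have hMk : 2 ≤ μ * k * M ^ m := by
    have h1 : ((2/(μ*k)) ^ (1/m)) ^ m ≤ M ^ m :=
      Real.rpow_le_rpow (Real.rpow_nonneg (by positivity) _)
        (by rw [hM_def]; exact le_max_right _ _) hm0.le
    have h2 : ((2/(μ*k)) ^ (1/m)) ^ m = 2/(μ*k) := by
      rw [← Real.rpow_mul (by positivity), show (1/m) * m = 1 by field_simp, Real.rpow_one]
    rw [h2] at h1
    have h3 : μ * k * (2/(μ*k)) ≤ μ * k * M ^ m :=
      mul_le_mul_of_nonneg_left h1 (by positivity)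
    have h4 : μ * k * (2/(μ*k)) = 2 := by field_simp
    linarith
  refine ⟨θ/2, M, by positivity, hM0, ?_⟩
  intro δ hδ t ht
  rcases eq_or_lt_of_le ht with h0 | ht0
  · -- t = 0
    subst h0
    have hphi0 : phi p δ 0 = 0 := intervalIntegral.integral_same
    have hmem : (0:ℝ) ∈ (fun s => s * 0 - phi p δ s) '' Set.Ici (0:ℝ) :=
      ⟨0, Set.self_mem_Ici, by simp [hphi0]⟩
    have hub : ∀ x ∈ (fun s => s * 0 - phi p δ s) '' Set.Ici (0:ℝ), x ≤ 0 := by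
      rintro x ⟨s, hs, rfl⟩
      have := phi_nonneg (p := p) hδ (Set.mem_Ici.mp hs)
      simp only
      linarith
    have hconj : phiConj p δ 0 = 0 := by
      apply le_antisymm (csSup_le ⟨0, hmem⟩ hub)
      exact le_csSup ⟨0, hub⟩ hmem
    rw [hconj]
    norm_num
  · -- t > 0
    have ha0 : 0 ≤ δ ^ (p-1) := Real.rpow_nonneg hδ _
    set D : ℝ := δ ^ (p-1) + t with hD_def
    have hD : 0 < D := by linarith
    set e : ℝ := p / (p-1) - 2 with he_def
    have heq : 1 + e = q := by rw [he_def, hq_def]; field_simp; ring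
    have heq2 : q * (p-2) + e = 0 := by rw [he_def, hq_def]; field_simp; ring
    set s₀ : ℝ := t * D ^ e with hs0_def
    have hDe0 : 0 < D ^ e := Real.rpow_pos_of_pos hD _
    have hs00 : 0 < s₀ := mul_pos ht0 hDe0
    have hDq : 0 < D ^ q := Real.rpow_pos_of_pos hD _
    have hDe : D * D ^ e = D ^ q := by
      calc D * D ^ e = D ^ (1:ℝ) * D ^ e := by rw [Real.rpow_one]
        _ = D ^ (1 + e) := (Real.rpow_add hD 1 e).symm
        _ = D ^ q := by rw [heq]
    have hδa : δ = (δ ^ (p-1)) ^ q := by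
      rw [← Real.rpow_mul hδ, show (p-1) * q = 1 by rw [hq_def]; field_simp, Real.rpow_one]
    -- bounds on δ + s₀
    have hup : δ + s₀ ≤ 2 * D ^ q := by
      have h1 : δ ≤ D ^ q := by
        rw [hδa]; exact Real.rpow_le_rpow ha0 (by linarith) hq0.le
      have h2 : s₀ ≤ D ^ q := by
        rw [hs0_def, ← hDe]
        exact mul_le_mul_of_nonneg_right (by linarith) hDe0.le
      linarith
    have hlo : c₃ * D ^ q ≤ δ + s₀ := by
      rcases le_total (δ ^ (p-1)) t with hat | hat
      · have h2 : D/2 ≤ t := by rw [hD_def]; linarith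
        have h3 : D/2 * D ^ e ≤ s₀ := mul_le_mul_of_nonneg_right h2 hDe0.le
        have h4 : D/2 * D ^ e = D ^ q / 2 := by rw [div_mul_eq_mul_div, hDe]
        have h5 : c₃ ≤ 1/2 := by rw [hc3_def]; exact min_le_right _ _
        nlinarith
      · have h2 : D/2 ≤ δ ^ (p-1) := by rw [hD_def]; linarith
        have h3 : (D/2) ^ q ≤ (δ ^ (p-1)) ^ q := Real.rpow_le_rpow (by positivity) h2 hq0.le
        have h4 : (D/2) ^ q = (1/2:ℝ) ^ q * D ^ q := by
          rw [show D/2 = (1/2)*D by ring, Real.mul_rpow (by norm_num) hD.le]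
        have h5 : c₃ ≤ (1/2:ℝ) ^ q := by rw [hc3_def]; exact min_le_left _ _
        have h6 : c₃ * D ^ q ≤ δ := by rw [hδa]; nlinarith
        linarith
    -- sandwich for (δ+s₀)^(p-2)
    have hDqp : (D ^ q) ^ (p-2) = D ^ (q*(p-2)) := (Real.rpow_mul hD.le q (p-2)).symm
    have hcancel : D ^ (q*(p-2)) * D ^ e = 1 := by
      rw [← Real.rpow_add hD, heq2, Real.rpow_zero]
    obtain ⟨hsl, hsu⟩ := rpow_sandwich (p := p) hDq hc30 two_pos hlo hup
    rw [hDqp, ← hk_def] at hsl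
    rw [hDqp, ← hK_def] at hsu
    have hg0u : phiDeriv p δ s₀ ≤ K * t := by
      have h1 : (δ + s₀) ^ (p-2) * s₀ ≤ (K * D ^ (q*(p-2))) * s₀ :=
        mul_le_mul_of_nonneg_right hsu hs00.le
      calc phiDeriv p δ s₀ ≤ (K * D ^ (q*(p-2))) * s₀ := h1
        _ = K * t * (D ^ (q*(p-2)) * D ^ e) := by rw [hs0_def]; ring
        _ = K * t := by rw [hcancel, mul_one]
    have hg0l : k * t ≤ phiDeriv p δ s₀ := by
      have h1 : (k * D ^ (q*(p-2))) * s₀ ≤ (δ + s₀) ^ (p-2) * s₀ :=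
        mul_le_mul_of_nonneg_right hsl hs00.le
      calc k * t = k * t * (D ^ (q*(p-2)) * D ^ e) := by rw [hcancel, mul_one]
        _ = (k * D ^ (q*(p-2))) * s₀ := by rw [hs0_def]; ring
        _ ≤ phiDeriv p δ s₀ := h1
    -- pointwise upper bound on the conjugate's defining set
    have hub : ∀ x ∈ (fun s => s * t - phi p δ s) '' Set.Ici (0:ℝ), x ≤ M * D ^ e * t ^ 2 := by
      rintro x ⟨s, hs, rfl⟩
      have hs' : (0:ℝ) ≤ s := hs
      simp only
      rcases le_or_gt s (M * s₀) with hcase | hcase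
      · have h1 : s * t ≤ M * s₀ * t := mul_le_mul_of_nonneg_right hcase ht0.le
        have h2 : M * s₀ * t = M * D ^ e * t ^ 2 := by rw [hs0_def]; ring
        have h3 : 0 ≤ phi p δ s := phi_nonneg hδ hs'
        linarith
      · -- here φ(s) ≥ s t
        have hMs0 : (0:ℝ) ≤ M * s₀ := by positivity
        have hg_half : μ * phiDeriv p δ s ≤ phiDeriv p δ (s/2) := by
          have h := (phiDeriv_scale hp hδ one_half_pos (by norm_num) hs').1
          rw [show (1/2:ℝ) * s = s/2 by ring] at h
          rw [hμ_def, hMx_def]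
          exact h
        have hmono : phiDeriv p δ (M * s₀) ≤ phiDeriv p δ s :=
          phiDeriv_monoOn hp hδ (Set.mem_Ici.mpr hMs0) (Set.mem_Ici.mpr hs') hcase.le
        have hMinv0 : 0 < 1/M := by positivity
        have hMinv1 : 1/M ≤ 1 := by
          rw [div_le_one hM0]; exact hM1
        have hscale := (phiDeriv_scale hp hδ hMinv0 hMinv1 hMs0).2
        rw [show (1/M) * (M * s₀) = s₀ by field_simp, ← hm_def] at hscale
        have hMm0 : (0:ℝ) < M ^ m := Real.rpow_pos_of_pos hM0 _
        have hMm : (1/M:ℝ) ^ m * M ^ m = 1 := by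
          rw [← Real.mul_rpow (by positivity) hM0.le, one_div, inv_mul_cancel₀ hM0.ne',
            Real.one_rpow]
        have hgM : M ^ m * phiDeriv p δ s₀ ≤ phiDeriv p δ (M * s₀) := by
          calc M ^ m * phiDeriv p δ s₀
              ≤ M ^ m * ((1/M) ^ m * phiDeriv p δ (M * s₀)) :=
                mul_le_mul_of_nonneg_left hscale hMm0.le
            _ = ((1/M) ^ m * M ^ m) * phiDeriv p δ (M * s₀) := by ring
            _ = phiDeriv p δ (M * s₀) := by rw [hMm, one_mul]
        have hchain : s * t ≤ phi p δ s := by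
          have c1 : s * t = s/2 * (2 * t) := by ring
          have c2 : s/2 * (2 * t) ≤ s/2 * (μ * k * M ^ m * t) :=
            mul_le_mul_of_nonneg_left (mul_le_mul_of_nonneg_right hMk ht0.le) (by linarith)
          have c3 : s/2 * (μ * k * M ^ m * t) = s/2 * (μ * (M ^ m * (k * t))) := by ring
          have c4 : s/2 * (μ * (M ^ m * (k * t))) ≤ s/2 * (μ * (M ^ m * phiDeriv p δ s₀)) := by
            apply mul_le_mul_of_nonneg_left _ (by linarith : (0:ℝ) ≤ s/2)
            apply mul_le_mul_of_nonneg_left _ hμ0.le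
            exact mul_le_mul_of_nonneg_left hg0l hMm0.le
          have c5 : s/2 * (μ * (M ^ m * phiDeriv p δ s₀)) ≤ s/2 * (μ * phiDeriv p δ (M * s₀)) := by
            apply mul_le_mul_of_nonneg_left _ (by linarith : (0:ℝ) ≤ s/2)
            exact mul_le_mul_of_nonneg_left hgM hμ0.le
          have c6 : s/2 * (μ * phiDeriv p δ (M * s₀)) ≤ s/2 * (μ * phiDeriv p δ s) := by
            apply mul_le_mul_of_nonneg_left _ (by linarith : (0:ℝ) ≤ s/2)
            exact mul_le_mul_of_nonneg_left hmono hμ0.le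
          have c7 : s/2 * (μ * phiDeriv p δ s) ≤ s/2 * phiDeriv p δ (s/2) :=
            mul_le_mul_of_nonneg_left hg_half (by linarith : (0:ℝ) ≤ s/2)
          have c8 := phi_ge hp hδ hs'
          linarith
        have hpos : 0 ≤ M * D ^ e * t ^ 2 := by positivity
        linarith
    have hne : ((fun s => s * t - phi p δ s) '' Set.Ici (0:ℝ)).Nonempty :=
      ⟨0 * t - phi p δ 0, 0, Set.self_mem_Ici, rfl⟩
    have hbdd : BddAbove ((fun s => s * t - phi p δ s) '' Set.Ici (0:ℝ)) :=
      ⟨M * D ^ e * t ^ 2, fun x hx => hub x hx⟩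
    constructor
    · -- lower bound
      have hs1 : (0:ℝ) ≤ θ * s₀ := by positivity
      have hmem : (θ * s₀) * t - phi p δ (θ * s₀) ∈
          (fun s => s * t - phi p δ s) '' Set.Ici (0:ℝ) :=
        ⟨θ * s₀, Set.mem_Ici.mpr hs1, rfl⟩
      have hle := le_csSup hbdd hmem
      have hφle : phi p δ (θ * s₀) ≤ (θ * s₀) * (t/2) := by
        have h1 : phi p δ (θ * s₀) ≤ (θ * s₀) * phiDeriv p δ (θ * s₀) := phi_le hp hδ hs1
        have h2 : phiDeriv p δ (θ * s₀) ≤ θ ^ m * phiDeriv p δ s₀ := by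
          have h := (phiDeriv_scale hp hδ hθ0 hθ1 hs00.le).2
          rw [← hm_def] at h
          exact h
        have h3 : θ ^ m * phiDeriv p δ s₀ ≤ θ ^ m * (K * t) :=
          mul_le_mul_of_nonneg_left hg0u (Real.rpow_nonneg hθ0.le _)
        have h4 : θ ^ m * (K * t) ≤ t/2 := by
          have := mul_le_mul_of_nonneg_right hθK ht0.le
          calc θ ^ m * (K * t) = (θ ^ m * K) * t := by ring
            _ ≤ 1/2 * t := this
            _ = t/2 := by ring
        have h5 : phiDeriv p δ (θ * s₀) ≤ t/2 := by linarith
        calc phi p δ (θ * s₀) ≤ (θ * s₀) * phiDeriv p δ (θ * s₀) := h1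
          _ ≤ (θ * s₀) * (t/2) := mul_le_mul_of_nonneg_left h5 hs1
      have hval : θ/2 * D ^ e * t ^ 2 ≤ (θ * s₀) * t - phi p δ (θ * s₀) := by
        have : (θ * s₀) * t - (θ * s₀) * (t/2) = θ/2 * D ^ e * t ^ 2 := by
          rw [hs0_def]; ring
        linarith
      exact le_trans hval hle
    · -- upper bound
      exact csSup_le hne hub
end

section
/- Let d ∈ {2,3}, p ∈ [2,∞), δ ≥ 0, and let S : ℝ^{d×d} → ℝ^{d×d}_sym have (p,δ)-structure with characteristics C₀, C₁ > 0. Then there exists a constant c > 0, depending only on C₀ and p, such that |A^sym − B^sym|^p ≤ c·(S(A) − S(B)) : (A − B) for all A, B ∈ ℝ^{d×d}. -/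
open Matrix
/-- Symmetric part `A^sym = (A + Aᵀ)/2` of a square matrix. -/
noncomputable def msym {d : ℕ} (A : Matrix (Fin d) (Fin d) ℝ) : Matrix (Fin d) (Fin d) ℝ :=
  (2 : ℝ)⁻¹ • (A + Aᵀ)

/-- Frobenius inner product `A : B = ∑ᵢⱼ Aᵢⱼ Bᵢⱼ`. -/
noncomputable def finner {d : ℕ} (A B : Matrix (Fin d) (Fin d) ℝ) : ℝ :=
  ∑ i, ∑ j, A i j * B i j

/-- Frobenius norm `|A| = (∑ᵢⱼ Aᵢⱼ²)^(1/2)`. -/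
noncomputable def fnorm {d : ℕ} (A : Matrix (Fin d) (Fin d) ℝ) : ℝ :=
  Real.sqrt (∑ i, ∑ j, (A i j) ^ 2)

/-- A continuous map `S : ℝ^{d×d} → ℝ^{d×d}_sym` with `S(A) = S(A^sym)`, `S(0) = 0`,
has `(p,δ)`-structure with characteristics `C₀, C₁ > 0` if for all `A, B`:
`(S(A) − S(B)) : (A − B) ≥ C₀·φ_{p,δ+|A^sym|}(|A^sym − B^sym|)` and
`|S(A) − S(B)| ≤ C₁·(δ+|A^sym|+|A^sym−B^sym|)^(p−2)·|A^sym − B^sym|`. -/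
def HasPStructure (d : ℕ) (p δ C₀ C₁ : ℝ)
    (S : Matrix (Fin d) (Fin d) ℝ → Matrix (Fin d) (Fin d) ℝ) : Prop :=
  Continuous S ∧
  (∀ A, (S A)ᵀ = S A) ∧
  (∀ A, S A = S (msym A)) ∧
  S 0 = 0 ∧
  (∀ A B, C₀ * phi p (δ + fnorm (msym A)) (fnorm (msym A - msym B)) ≤
      finner (S A - S B) (A - B)) ∧
  (∀ A B, fnorm (S A - S B) ≤
      C₁ * (δ + fnorm (msym A) + fnorm (msym A - msym B)) ^ (p - 2) *
        fnorm (msym A - msym B))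


lemma phi_key (p δ' t : ℝ) (hp : 2 ≤ p) (hδ : 0 ≤ δ') (ht : 0 ≤ t) :
    t ^ p ≤ p * phi p δ' t := by
  have hp0 : (0:ℝ) < p := by linarith
  have h1 : ∫ s in (0:ℝ)..t, s ^ (p - 1) = t ^ p / p := by
    rw [integral_rpow (Or.inl (by linarith))]
    rw [Real.zero_rpow (ne_of_gt (show (0:ℝ) < p - 1 + 1 by linarith))]
    ring_nf
  have hmono : MonotoneOn (phiDeriv p δ') (Set.uIcc 0 t) := by
    intro x hx y hy hxy
    have hx0 : 0 ≤ x := by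
      rcases Set.mem_uIcc.mp hx with h | h
      · exact h.1
      · linarith [h.1, h.2]
    unfold phiDeriv
    have : (δ' + x) ^ (p - 2) ≤ (δ' + y) ^ (p - 2) :=
      Real.rpow_le_rpow (by linarith) (by linarith) (by linarith)
    have h2 : (0:ℝ) ≤ (δ' + x) ^ (p - 2) := Real.rpow_nonneg (by linarith) _
    nlinarith [Real.rpow_nonneg (show (0:ℝ) ≤ δ' + y by linarith) (p - 2)]
  have hint1 : IntervalIntegrable (fun s => s ^ (p - 1)) MeasureTheory.volume 0 t :=
    intervalIntegral.intervalIntegrable_rpow' (by linarith)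
  have hint2 : IntervalIntegrable (phiDeriv p δ') MeasureTheory.volume 0 t :=
    hmono.intervalIntegrable
  have h2 : ∫ s in (0:ℝ)..t, s ^ (p - 1) ≤ phi p δ' t := by
    unfold phi
    apply intervalIntegral.integral_mono_on ht hint1 hint2
    intro s hs
    have hs0 : 0 ≤ s := hs.1
    unfold phiDeriv
    rcases eq_or_lt_of_le hs0 with h | h
    · rw [← h, Real.zero_rpow (by linarith : p - 1 ≠ 0), mul_zero]
    · have : s ^ (p - 1) = s ^ (p - 2) * s ^ (1:ℝ) := by
        rw [← Real.rpow_add h]; ring_nf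
      rw [this, Real.rpow_one]
      apply mul_le_mul_of_nonneg_right _ hs0
      exact Real.rpow_le_rpow hs0 (by linarith) (by linarith)
  calc t ^ p = p * (t ^ p / p) := by field_simp
    _ ≤ p * phi p δ' t := by
        apply mul_le_mul_of_nonneg_left _ (le_of_lt hp0)
        rw [← h1]; exact h2

/-- Let `d ∈ {2,3}`, `p ∈ [2,∞)`, `δ ≥ 0`, and let `S` have
`(p,δ)`-structure with characteristics `C₀, C₁ > 0`. Then there is a constant `c > 0`,
depending only on `C₀` and `p`, with
`|A^sym − B^sym|^p ≤ c·(S(A) − S(B)) : (A − B)` for all `A, B`. -/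
theorem stmt10 (d : ℕ) (hd : d = 2 ∨ d = 3) (p C₀ : ℝ) (hp : 2 ≤ p) (hC₀ : 0 < C₀) :
    ∃ c : ℝ, 0 < c ∧
      ∀ δ : ℝ, 0 ≤ δ → ∀ C₁ : ℝ, 0 < C₁ →
        ∀ S : Matrix (Fin d) (Fin d) ℝ → Matrix (Fin d) (Fin d) ℝ,
          HasPStructure d p δ C₀ C₁ S →
            ∀ A B, (fnorm (msym A - msym B)) ^ p ≤ c * finner (S A - S B) (A - B) := by
  refine ⟨p / C₀, by positivity, fun δ hδ C₁ hC₁ S hS A B => ?_⟩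
  obtain ⟨-, -, -, -, h5, -⟩ := hS
  have hδ' : 0 ≤ δ + fnorm (msym A) := by
    have := Real.sqrt_nonneg (∑ i, ∑ j, (msym A i j) ^ 2)
    unfold fnorm; linarith
  have ht : 0 ≤ fnorm (msym A - msym B) := Real.sqrt_nonneg _
  have key := phi_key p (δ + fnorm (msym A)) (fnorm (msym A - msym B)) hp hδ' ht
  have h := h5 A B
  have hp0 : (0:ℝ) < p := by linarith
  calc (fnorm (msym A - msym B)) ^ p
      ≤ p * phi p (δ + fnorm (msym A)) (fnorm (msym A - msym B)) := key
    _ ≤ p / C₀ * finner (S A - S B) (A - B) := by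
        rw [div_mul_eq_mul_div, le_div_iff₀ hC₀]
        nlinarith
end

section
/- Let (V_n)_{n∈ℕ} be a non-conforming approximation of a reflexive Banach space V with respect to (X_n)_{n∈ℕ} and Y. If A_n : X_n → X_n* and B_n : X_n → X_n*, n ∈ ℕ, are non-conforming pseudo-monotone with respect to (V_n)_{n∈ℕ} and A : V → V* and B : V → V*, respectively, then the sequence A_n + B_n : X_n → X_n*, n ∈ ℕ, is non-conforming pseudo-monotone with respect to (V_n)_{n∈ℕ} and A + B : V → V*. -/
/-!
If `limsup ⟨Aₙuₙ + Bₙuₙ, uₙ − v⟩ ≤ 0`, then already `limsup ⟨Aₙuₙ, uₙ − v⟩ ≤ 0`: otherwise, along a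
subsequence on which the `A`-part exceeds some `c > 0`, the `B`-part has `limsup ≤ −c/2`, while the
pseudo-monotonicity of `(Bₙ)` tested at `z = v` gives `liminf ≥ 0` along that subsequence. By
symmetry the same holds for the `B`-part, so both pseudo-monotonicity inequalities apply, and their
sum is bounded by the liminf of the sum by superadditivity of `liminf`.
-/

open Filter Topology

/-- Weak convergence of a sequence in a normed space `Y`: testing against all
continuous linear functionals. -/
def WeakConv {Y : Type*} [NormedAddCommGroup Y] [NormedSpace ℝ Y]
    (y : ℕ → Y) (l : Y) : Prop :=
  ∀ f : Y →L[ℝ] ℝ, Tendsto (fun n => f (y n)) atTop (nhds (f l))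

/-- A normed space is reflexive if the canonical inclusion into its double dual is
surjective. -/
def IsReflexiveSpace (E : Type*) [NormedAddCommGroup E] [NormedSpace ℝ E] : Prop :=
  Function.Surjective (NormedSpace.inclusionInDoubleDual ℝ E)

variable {V Y : Type*} [NormedAddCommGroup V] [NormedSpace ℝ V]
  [NormedAddCommGroup Y] [NormedSpace ℝ Y]
  {X : ℕ → Type*} [∀ n, NormedAddCommGroup (X n)] [∀ n, NormedSpace ℝ (X n)]

/-- `(Vₙ)` is a non-conforming approximation of `V` with respect to `(Xₙ)` and `Y`.
Here `j n : V →ₗᵢ[ℝ] X n` are the norm-preserving inclusions `V ⊆ Xₙ`,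
`e n : X n →L[ℝ] Y` the inclusions `Xₙ ⊆ Y`, and `eV : V →L[ℝ] Y` the induced
inclusion `V ⊆ Y` (compatibility `e n ∘ j n = eV`). The two conditions are:
(NC.1) there is a dense set `D ⊆ V` such that every `v ∈ D` admits a sequence
`uₙ ∈ Vₙ` with `‖uₙ − v‖_{Xₙ} → 0`; (NC.2) every sequence `uₙ ∈ V_{mₙ}` with
`mₙ → ∞` and `sup ‖uₙ‖ < ∞` has a subsequence converging weakly in `Y` to some
element of `V`. -/
def NonconformingApprox (j : ∀ n, V →ₗᵢ[ℝ] X n) (e : ∀ n, X n →L[ℝ] Y)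
    (eV : V →L[ℝ] Y) (Vn : ∀ n, Submodule ℝ (X n)) : Prop :=
  (∀ n v, e n (j n v) = eV v) ∧
  (∃ D : Set V, Dense D ∧ ∀ v ∈ D, ∃ u : ∀ n, X n, (∀ n, u n ∈ Vn n) ∧
      Tendsto (fun n => ‖u n - j n v‖) atTop (nhds 0)) ∧
  (∀ m : ℕ → ℕ, Tendsto m atTop atTop →
    ∀ u : ∀ n, X (m n), (∀ n, u n ∈ Vn (m n)) → (∃ C, ∀ n, ‖u n‖ ≤ C) →
      ∃ (φ : ℕ → ℕ) (v : V), StrictMono φ ∧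
        WeakConv (fun ℓ => e (m (φ ℓ)) (u (φ ℓ))) (eV v))

/-- The sequence of operators `Aₙ : Xₙ → Xₙ*` is non-conforming pseudo-monotone with
respect to `(Vₙ)` and `A₀ : V → V*`: whenever `uₙ ∈ V_{mₙ}` with `mₙ → ∞`,
`sup ‖uₙ‖ < ∞`, `uₙ ⇀ v` weakly in `Y` for `v ∈ V`, and
`limsupₙ ⟨A_{mₙ} uₙ, uₙ − v⟩ ≤ 0`, then
`⟨A₀ v, v − z⟩ ≤ liminfₙ ⟨A_{mₙ} uₙ, uₙ − z⟩` for all `z ∈ V`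
(limes superior/inferior taken in the extended reals). -/
def NCPseudoMonotone (j : ∀ n, V →ₗᵢ[ℝ] X n) (e : ∀ n, X n →L[ℝ] Y)
    (eV : V →L[ℝ] Y) (Vn : ∀ n, Submodule ℝ (X n))
    (A : ∀ n, X n → (X n →L[ℝ] ℝ)) (A₀ : V → (V →L[ℝ] ℝ)) : Prop :=
  ∀ m : ℕ → ℕ, Tendsto m atTop atTop →
    ∀ u : ∀ n, X (m n), (∀ n, u n ∈ Vn (m n)) → (∃ C, ∀ n, ‖u n‖ ≤ C) →
      ∀ v : V, WeakConv (fun n => e (m n) (u n)) (eV v) →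
        limsup (fun n => ((A (m n) (u n)) (u n - j (m n) v) : EReal)) atTop ≤ 0 →
        ∀ z : V, ((A₀ v) (v - z) : EReal) ≤
          liminf (fun n => ((A (m n) (u n)) (u n - j (m n) z) : EReal)) atTop

theorem limsup_le_zero_of_limsup_add_le_zero {a b : ℕ → ℝ}
    (hb : ∀ φ : ℕ → ℕ, StrictMono φ → limsup (fun n => (b (φ n) : EReal)) atTop ≤ 0 →
      0 ≤ liminf (fun n => (b (φ n) : EReal)) atTop)
    (hab : limsup (fun n => ((a n + b n : ℝ) : EReal)) atTop ≤ 0) :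
    limsup (fun n => (a n : EReal)) atTop ≤ 0 := by
  by_contra! hpos
  obtain ⟨c, hc0, hca⟩ := EReal.exists_between_coe_real hpos
  have hc : (0 : ℝ) < c := mod_cast hc0
  obtain ⟨φ, hφ, hφc⟩ :=
    extraction_of_frequently_atTop (frequently_lt_of_lt_limsup (by isBoundedDefault) hca)
  have hsum_small : ∀ᶠ n in atTop, ((a (φ n) + b (φ n) : ℝ) : EReal) < ((c / 2 : ℝ) : EReal) :=
    hφ.tendsto_atTop.eventually
      (eventually_lt_of_limsup_lt (hab.trans_lt (mod_cast half_pos hc)))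
  have hb_neg : ∀ᶠ n in atTop, (b (φ n) : EReal) ≤ ((-(c / 2) : ℝ) : EReal) :=
    hsum_small.mono fun n hn => by
      have hcn : c < a (φ n) := mod_cast hφc n
      have : a (φ n) + b (φ n) < c / 2 := mod_cast hn
      exact mod_cast (by linarith)
  have hlimsup : limsup (fun n => (b (φ n) : EReal)) atTop ≤ ((-(c / 2) : ℝ) : EReal) :=
    limsup_le_of_le (by isBoundedDefault) hb_neg
  have hliminf := hb φ hφ (hlimsup.trans (mod_cast by linarith))
  have h0 : ((0 : ℝ) : EReal) ≤ ((-(c / 2) : ℝ) : EReal) :=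
    hliminf.trans ((liminf_le_limsup (f := atTop)).trans hlimsup)
  linarith [EReal.coe_le_coe_iff.mp h0]

namespace NCPseudoMonotone

variable {j : ∀ n, V →ₗᵢ[ℝ] X n} {e : ∀ n, X n →L[ℝ] Y} {eV : V →L[ℝ] Y}
  {Vn : ∀ n, Submodule ℝ (X n)} {B : ∀ n, X n → (X n →L[ℝ] ℝ)} {B₀ : V → (V →L[ℝ] ℝ)}
  {m : ℕ → ℕ} {u : ∀ n, X (m n)} {v : V}

theorem zero_le_liminf_comp (hB : NCPseudoMonotone j e eV Vn B B₀)
    (hm : Tendsto m atTop atTop) (hu : ∀ n, u n ∈ Vn (m n)) (hbd : ∃ C, ∀ n, ‖u n‖ ≤ C)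
    (hw : WeakConv (fun n => e (m n) (u n)) (eV v)) {φ : ℕ → ℕ} (hφ : StrictMono φ)
    (hle : limsup (fun n => (B (m (φ n)) (u (φ n)) (u (φ n) - j (m (φ n)) v) : EReal))
      atTop ≤ 0) :
    0 ≤ liminf (fun n => (B (m (φ n)) (u (φ n)) (u (φ n) - j (m (φ n)) v) : EReal)) atTop := by
  have hφ_tendsto := hφ.tendsto_atTop
  have h := hB (fun n => m (φ n)) (hm.comp hφ_tendsto) (fun n => u (φ n)) (fun n => hu (φ n))
    (hbd.imp fun C hC n => hC (φ n)) v (fun f => (hw f).comp hφ_tendsto) hle v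
  rwa [sub_self, map_zero, EReal.coe_zero] at h

theorem limsup_le_zero_of_limsup_add_le_zero (hB : NCPseudoMonotone j e eV Vn B B₀)
    (hm : Tendsto m atTop atTop) (hu : ∀ n, u n ∈ Vn (m n)) (hbd : ∃ C, ∀ n, ‖u n‖ ≤ C)
    (hw : WeakConv (fun n => e (m n) (u n)) (eV v)) (A : ∀ n, X n → (X n →L[ℝ] ℝ))
    (hsum : limsup (fun n =>
      ((A (m n) (u n) (u n - j (m n) v) + B (m n) (u n) (u n - j (m n) v) : ℝ) : EReal))
      atTop ≤ 0) :
    limsup (fun n => (A (m n) (u n) (u n - j (m n) v) : EReal)) atTop ≤ 0 :=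
  _root_.limsup_le_zero_of_limsup_add_le_zero (a := fun n => A (m n) (u n) (u n - j (m n) v))
    (b := fun n => B (m n) (u n) (u n - j (m n) v))
    (fun _ hφ => hB.zero_le_liminf_comp hm hu hbd hw hφ) hsum

end NCPseudoMonotone

theorem stmt11_general
    (j : ∀ n, V →ₗᵢ[ℝ] X n) (e : ∀ n, X n →L[ℝ] Y) (eV : V →L[ℝ] Y)
    (Vn : ∀ n, Submodule ℝ (X n))
    (A B : ∀ n, X n → (X n →L[ℝ] ℝ)) (A₀ B₀ : V → (V →L[ℝ] ℝ))
    (hA : NCPseudoMonotone j e eV Vn A A₀)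
    (hB : NCPseudoMonotone j e eV Vn B B₀) :
    NCPseudoMonotone j e eV Vn (fun n x => A n x + B n x) (fun v => A₀ v + B₀ v) := by
  intro m hm u hu hbd v hw hsum z
  simp only [add_apply] at hsum
  have hsum' : limsup (fun n =>
      ((B (m n) (u n) (u n - j (m n) v) + A (m n) (u n) (u n - j (m n) v) : ℝ) : EReal))
      atTop ≤ 0 := by
    simpa only [add_comm] using hsum
  have hA_le := hB.limsup_le_zero_of_limsup_add_le_zero hm hu hbd hw A hsum
  have hB_le := hA.limsup_le_zero_of_limsup_add_le_zero hm hu hbd hw B hsum'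
  simp only [add_apply, EReal.coe_add]
  exact (add_le_add (hA m hm u hu hbd v hw hA_le z) (hB m hm u hu hbd v hw hB_le z)).trans
    EReal.le_liminf_add

/-- If `(Vₙ)` is a non-conforming approximation of the reflexive Banach
space `V` with respect to `(Xₙ)` and `Y`, and `Aₙ, Bₙ : Xₙ → Xₙ*` are non-conforming
pseudo-monotone with respect to `(Vₙ)` and `A₀, B₀ : V → V*` respectively, then
`Aₙ + Bₙ` is non-conforming pseudo-monotone with respect to `(Vₙ)` and `A₀ + B₀`. -/
theorem stmt11 [CompleteSpace V] [∀ n, CompleteSpace (X n)] [CompleteSpace Y]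
    (hVrefl : IsReflexiveSpace V)
    (j : ∀ n, V →ₗᵢ[ℝ] X n) (e : ∀ n, X n →L[ℝ] Y) (eV : V →L[ℝ] Y)
    (Vn : ∀ n, Submodule ℝ (X n))
    (hVncl : ∀ n, IsClosed (Vn n : Set (X n)))
    (hVnrefl : ∀ n, IsReflexiveSpace (Vn n))
    (hNC : NonconformingApprox j e eV Vn)
    (A B : ∀ n, X n → (X n →L[ℝ] ℝ)) (A₀ B₀ : V → (V →L[ℝ] ℝ))
    (hA : NCPseudoMonotone j e eV Vn A A₀)
    (hB : NCPseudoMonotone j e eV Vn B B₀) :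
    NCPseudoMonotone j e eV Vn (fun n x => A n x + B n x) (fun v => A₀ v + B₀ v) :=
  stmt11_general j e eV Vn A B A₀ B₀ hA hB
end

section
/- Let (V_n)_{n∈ℕ} be a non-conforming approximation of a reflexive Banach space V with respect to (X_n)_{n∈ℕ} and Y, and let A_n : X_n → X_n*, n ∈ ℕ, be non-conforming pseudo-monotone with respect to (V_n) and A : V → V*, satisfying the conditions (AN.1)–(AN.3). Let f ∈ V* and f_n ∈ X_n*, n ∈ ℕ, satisfy (BN.1) and (BN.2). If for every n ∈ ℕ, v_n ∈ V_n satisfies ⟨A_n v_n, z_n⟩_{X_n} = ⟨f_n, z_n⟩_{X_n} for all z_n ∈ V_n, then sup_n (‖A_n v_n‖_{X_n*} + ‖v_n‖_{X_n}) < ∞. -/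
open Filter Topology

variable {V Y : Type*} [NormedAddCommGroup V] [NormedSpace ℝ V]
  [NormedAddCommGroup Y] [NormedSpace ℝ Y]
  {X : ℕ → Type*} [∀ n, NormedAddCommGroup (X n)] [∀ n, NormedSpace ℝ (X n)]

/-- An operator `A : E → E*` on a real normed space is pseudo-monotone: for every
sequence `uₙ ⇀ v` weakly in `E` with `limsupₙ ⟨A uₙ, uₙ − v⟩ ≤ 0`, it follows that
`⟨A v, v − z⟩ ≤ liminfₙ ⟨A uₙ, uₙ − z⟩` for all `z ∈ E`. -/
def PseudoMonotoneOp {E : Type*} [NormedAddCommGroup E] [NormedSpace ℝ E]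
    (A : E → (E →L[ℝ] ℝ)) : Prop :=
  ∀ (u : ℕ → E) (v : E),
    (∀ f : E →L[ℝ] ℝ, Tendsto (fun n => f (u n)) atTop (nhds (f v))) →
    limsup (fun n => ((A (u n)) (u n - v) : EReal)) atTop ≤ 0 →
    ∀ z : E, ((A v) (v - z) : EReal) ≤
      liminf (fun n => ((A (u n)) (u n - z) : EReal)) atTop

/-- stability: if `vₙ ∈ Vₙ` solve the discrete problems, then
`supₙ (‖Aₙ vₙ‖ + ‖vₙ‖) < ∞`. -/
theorem stmt13 [CompleteSpace V] [∀ n, CompleteSpace (X n)] [CompleteSpace Y]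
    (hVrefl : IsReflexiveSpace V)
    (j : ∀ n, V →ₗᵢ[ℝ] X n) (e : ∀ n, X n →L[ℝ] Y) (eV : V →L[ℝ] Y)
    (Vn : ∀ n, Submodule ℝ (X n))
    (hVncl : ∀ n, IsClosed (Vn n : Set (X n)))
    (hVnrefl : ∀ n, IsReflexiveSpace (Vn n))
    (hNC : NonconformingApprox j e eV Vn)
    (A : ∀ n, X n → (X n →L[ℝ] ℝ)) (A₀ : V → (V →L[ℝ] ℝ))
    (hpm : NCPseudoMonotone j e eV Vn A A₀)
    -- (AN.1): each `Aₙ` is pseudo-monotone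
    (hAN1 : ∀ n, PseudoMonotoneOp (A n))
    -- (AN.2): weak coercivity, uniformly in `n`
    (hAN2 : ∃ 𝒞 : ℝ → ℝ, Tendsto 𝒞 atTop atTop ∧ ∃ c : ℝ, 0 < c ∧
      ∀ n, ∀ z ∈ Vn n, 𝒞 ‖z‖ * ‖z‖ - c ≤ (A n z) z)
    -- (AN.3): uniform boundedness
    (hAN3 : ∃ ℬ : ℝ → ℝ, Monotone ℬ ∧ (∀ s, 0 ≤ ℬ s) ∧
      ∀ n, ∀ z ∈ Vn n, ‖A n z‖ ≤ ℬ ‖z‖)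
    (f₀ : V →L[ℝ] ℝ) (fseq : ∀ n, X n →L[ℝ] ℝ)
    -- (BN.1)
    (hBN1 : ∃ C : ℝ, ∀ n, ‖fseq n‖ ≤ C)
    -- (BN.2)
    (hBN2 : ∀ m : ℕ → ℕ, Tendsto m atTop atTop →
      ∀ u : ∀ n, X (m n), (∀ n, u n ∈ Vn (m n)) → (∃ C, ∀ n, ‖u n‖ ≤ C) →
        ∀ v : V, WeakConv (fun n => e (m n) (u n)) (eV v) →
          Tendsto (fun n => (fseq (m n)) (u n)) atTop (nhds (f₀ v)))
    -- a sequence of discrete solutions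
    (vsol : ∀ n, X n) (hsolmem : ∀ n, vsol n ∈ Vn n)
    (hsol : ∀ n, ∀ z ∈ Vn n, (A n (vsol n)) z = (fseq n) z) :
    ∃ C : ℝ, ∀ n, ‖A n (vsol n)‖ + ‖vsol n‖ ≤ C := by
  obtain ⟨𝒞, h𝒞, c, hc, hcoer⟩ := hAN2
  obtain ⟨ℬ, hℬmono, hℬpos, hℬ⟩ := hAN3
  obtain ⟨Cf, hCf⟩ := hBN1
  -- choose M such that 𝒞 s ≥ Cf + 1 for s ≥ M
  obtain ⟨M, hM⟩ := (h𝒞.eventually_ge_atTop (Cf + 1)).exists_forall_of_atTop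
  set R := max M c with hR
  have hbound : ∀ n, ‖vsol n‖ ≤ R := by
    intro n
    by_contra h
    push_neg at h
    have hRv : R < ‖vsol n‖ := h
    have hMv : M ≤ ‖vsol n‖ := le_of_lt (lt_of_le_of_lt (le_max_left _ _) hRv)
    have h1 : (Cf + 1) ≤ 𝒞 ‖vsol n‖ := hM _ hMv
    have h2 : 𝒞 ‖vsol n‖ * ‖vsol n‖ - c ≤ (A n (vsol n)) (vsol n) :=
      hcoer n _ (hsolmem n)
    have h3 : (A n (vsol n)) (vsol n) = (fseq n) (vsol n) := hsol n _ (hsolmem n)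
    have h4 : (fseq n) (vsol n) ≤ Cf * ‖vsol n‖ := by
      calc (fseq n) (vsol n) ≤ ‖fseq n‖ * ‖vsol n‖ :=
            le_trans (le_abs_self _) ((fseq n).le_opNorm _)
        _ ≤ Cf * ‖vsol n‖ := by
            exact mul_le_mul_of_nonneg_right (hCf n) (norm_nonneg _)
    have h5 : (Cf + 1) * ‖vsol n‖ - c ≤ Cf * ‖vsol n‖ := by
      have := mul_le_mul_of_nonneg_right h1 (norm_nonneg (vsol n))
      nlinarith [h2, h3 ▸ h2, h4]
    have h6 : ‖vsol n‖ ≤ c := by nlinarith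
    have : c < ‖vsol n‖ := lt_of_le_of_lt (le_max_right M c) hRv
    linarith
  refine ⟨ℬ R + R, fun n => ?_⟩
  have hA : ‖A n (vsol n)‖ ≤ ℬ R :=
    le_trans (hℬ n _ (hsolmem n)) (hℬmono (hbound n))
  linarith [hbound n, hA]
end

section
/- Let (a_n)_{n∈ℕ} and (b_n)_{n∈ℕ} be sequences of real numbers with limsup_n (a_n + b_n) ≤ 0. Assume that for every subsequence (n_ℓ)_{ℓ∈ℕ}: if limsup_ℓ a_{n_ℓ} ≤ 0 then liminf_ℓ a_{n_ℓ} ≥ 0, and if limsup_ℓ b_{n_ℓ} ≤ 0 then liminf_ℓ b_{n_ℓ} ≥ 0. Then limsup_n a_n ≤ 0 and limsup_n b_n ≤ 0 (and consequently a_n → 0 and b_n → 0). -/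
/-!
If `limsup aₙ > 0`, pick `0 < c < limsup aₙ` and a subsequence along which `aₙ > c`. Along it
`limsup bₙ ≤ limsup (aₙ + bₙ) - c < 0`, so the hypothesis on `b` forces `liminf bₙ ≥ 0` there,
which is absurd. Hence `limsup aₙ ≤ 0`, symmetrically `limsup bₙ ≤ 0`, and the hypotheses applied
to the whole sequences give the matching `liminf` bounds.
-/

open Filter Topology

theorem limsup_coe_le_sub_of_limsup_coe_add_le {α : Type*} {f : Filter α} {u v : α → ℝ}
    {L c : ℝ} (hsum : limsup (fun x => ((u x + v x : ℝ) : EReal)) f ≤ L)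
    (hu : ∀ᶠ x in f, c ≤ u x) :
    limsup (fun x => (v x : EReal)) f ≤ ((L - c : ℝ) : EReal) := by
  have hneg : limsup (fun x => ((-u x : ℝ) : EReal)) f ≤ ((-c : ℝ) : EReal) :=
    limsup_le_of_le (by isBoundedDefault) <| hu.mono fun x hx => by exact_mod_cast neg_le_neg hx
  have hsplit : (fun x => (v x : EReal)) =
      (fun x => ((u x + v x : ℝ) : EReal)) + fun x => ((-u x : ℝ) : EReal) := by
    funext x
    rw [Pi.add_apply, ← EReal.coe_add]
    ring_nf
  calc limsup (fun x => (v x : EReal)) f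
      ≤ limsup (fun x => ((u x + v x : ℝ) : EReal)) f
          + limsup (fun x => ((-u x : ℝ) : EReal)) f := by
        rw [hsplit]
        exact EReal.limsup_add_le (.inr (hneg.trans_lt (EReal.coe_lt_top _)).ne)
          (.inl (hsum.trans_lt (EReal.coe_lt_top _)).ne)
    _ ≤ (L : EReal) + ((-c : ℝ) : EReal) := add_le_add hsum hneg
    _ = ((L - c : ℝ) : EReal) := by rw [← EReal.coe_add, sub_eq_add_neg]

theorem limsup_coe_le_zero_of_limsup_coe_add_le_zero (a b : ℕ → ℝ)
    (hsum : limsup (fun n => ((a n + b n : ℝ) : EReal)) atTop ≤ 0)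
    (hb : ∀ φ : ℕ → ℕ, StrictMono φ →
      limsup (fun ℓ => ((b (φ ℓ) : ℝ) : EReal)) atTop ≤ 0 →
      0 ≤ liminf (fun ℓ => ((b (φ ℓ) : ℝ) : EReal)) atTop) :
    limsup (fun n => ((a n : ℝ) : EReal)) atTop ≤ 0 := by
  by_contra! h
  obtain ⟨c, hc0, hc⟩ := EReal.lt_iff_exists_real_btwn.1 h
  obtain ⟨φ, hφ, hφc⟩ :=
    extraction_of_frequently_atTop (frequently_lt_of_lt_limsup (by isBoundedDefault) hc)
  have hsumφ : limsup (fun ℓ => ((a (φ ℓ) + b (φ ℓ) : ℝ) : EReal)) atTop ≤ ((0 : ℝ) : EReal) :=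
    hφ.tendsto_atTop.limsup_comp_le_limsup.trans hsum
  have hbφ : limsup (fun ℓ => ((b (φ ℓ) : ℝ) : EReal)) atTop ≤ ((0 - c : ℝ) : EReal) :=
    limsup_coe_le_sub_of_limsup_coe_add_le hsumφ
      (Eventually.of_forall fun ℓ => (EReal.coe_lt_coe_iff.1 (hφc ℓ)).le)
  have hneg : ((0 - c : ℝ) : EReal) < 0 := by
    exact_mod_cast sub_neg.2 (EReal.coe_pos.1 hc0)
  have hliminf := hb φ hφ (hbφ.trans hneg.le)
  exact hneg.not_ge (hliminf.trans ((liminf_le_limsup (by isBoundedDefault)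
    (by isBoundedDefault)).trans hbφ))

theorem tendsto_of_le_liminf_coe_of_limsup_coe_le {α : Type*} {f : Filter α} {u : α → ℝ} {l : ℝ}
    (hinf : (l : EReal) ≤ liminf (fun x => (u x : EReal)) f)
    (hsup : limsup (fun x => (u x : EReal)) f ≤ l) :
    Tendsto u f (𝓝 l) :=
  EReal.tendsto_coe.1 (tendsto_of_le_liminf_of_limsup_le hinf hsup)

/-- real-sequence splitting argument: Let `(aₙ)`, `(bₙ)` be real
sequences with `limsupₙ (aₙ + bₙ) ≤ 0` (in the extended reals). Assume that for every
subsequence: if `limsup_ℓ a_{n_ℓ} ≤ 0` then `liminf_ℓ a_{n_ℓ} ≥ 0`, and likewise for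
`b`. Then `limsupₙ aₙ ≤ 0` and `limsupₙ bₙ ≤ 0` (and consequently `aₙ → 0` and
`bₙ → 0`). -/
theorem stmt15 (a b : ℕ → ℝ)
    (hsum : limsup (fun n => ((a n + b n : ℝ) : EReal)) atTop ≤ 0)
    (ha : ∀ φ : ℕ → ℕ, StrictMono φ →
      limsup (fun ℓ => ((a (φ ℓ) : ℝ) : EReal)) atTop ≤ 0 →
      0 ≤ liminf (fun ℓ => ((a (φ ℓ) : ℝ) : EReal)) atTop)
    (hb : ∀ φ : ℕ → ℕ, StrictMono φ →
      limsup (fun ℓ => ((b (φ ℓ) : ℝ) : EReal)) atTop ≤ 0 →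
      0 ≤ liminf (fun ℓ => ((b (φ ℓ) : ℝ) : EReal)) atTop) :
    limsup (fun n => ((a n : ℝ) : EReal)) atTop ≤ 0 ∧
    limsup (fun n => ((b n : ℝ) : EReal)) atTop ≤ 0 ∧
    Filter.Tendsto a atTop (nhds 0) ∧ Filter.Tendsto b atTop (nhds 0) := by
  have hA := limsup_coe_le_zero_of_limsup_coe_add_le_zero a b hsum hb
  have hB := limsup_coe_le_zero_of_limsup_coe_add_le_zero b a
    (by simpa only [add_comm] using hsum) ha
  refine ⟨hA, hB, ?_, ?_⟩
  · exact tendsto_of_le_liminf_coe_of_limsup_coe_le (ha id strictMono_id hA) hA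
  · exact tendsto_of_le_liminf_coe_of_limsup_coe_le (hb id strictMono_id hB) hB
end
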